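/- arXiv:1406.1054 — 3 statements merged into one kernel-verified Lean document; each statement's English description precedes it below -/
import Mathlib

section
/- The special elliptic formal group law F(x,y) = (x + y - μ₁xy)·(1 + μ₂xy)⁻¹ over the polynomial ring ℤ[μ₁,μ₂] is a one-dimensional commutative formal group law: F(x,0) = x, F(0,y) = y, F(x,y) = F(y,x), and F(F(x,y),z) = F(x,F(y,z)) as formal power series in ℤ[μ₁,μ₂][[x,y,z]]. -/
/-!
Formal group law preliminaries: substitution of (multivariate) formal power series,
the definition of a one-dimensional commutative formal group law, its formal inverse,
and the formal difference `x -_F y := F(x, ι(y))`.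
-/

noncomputable section

open MvPowerSeries

/-- Substitution `f(a 0, a 1, …)` of multivariate power series (the intended use is when
each `a i` has zero constant coefficient): the coefficient at `e` only receives
contributions from monomials of `f` with exponent `d` such that each `d i` is at most the
total degree of `e`. -/
def MvPowerSeries.substSeries {σ τ R : Type*} [Fintype σ] [DecidableEq σ] [CommRing R]
    (a : σ → MvPowerSeries τ R) (f : MvPowerSeries σ R) : MvPowerSeries τ R :=
  fun e => ∑ d ∈ Finset.Iic (Finsupp.equivFunOnFinite.symm fun _ : σ => e.sum fun _ n => n),
    MvPowerSeries.coeff (R := R) d f * MvPowerSeries.coeff (R := R) e (∏ i, (a i) ^ d i)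

/-- A one-dimensional commutative formal group law over a commutative ring `R`:
a power series `F ∈ R[[x,y]]` with `F(x,0) = x`, `F(0,y) = y`, `F(x,y) = F(y,x)` and
`F(F(x,y),z) = F(x,F(y,z))` (an identity of power series in `R[[x,y,z]]`). -/
structure IsFormalGroupLaw (R : Type*) [CommRing R] (F : MvPowerSeries (Fin 2) R) : Prop where
  subst_zero_right :
    MvPowerSeries.substSeries (![X 0, 0] : Fin 2 → MvPowerSeries (Fin 2) R) F = X 0
  subst_zero_left :
    MvPowerSeries.substSeries (![0, X 1] : Fin 2 → MvPowerSeries (Fin 2) R) F = X 1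
  comm :
    MvPowerSeries.substSeries (![X 1, X 0] : Fin 2 → MvPowerSeries (Fin 2) R) F = F
  assoc :
    MvPowerSeries.substSeries
      (![MvPowerSeries.substSeries (![X 0, X 1] : Fin 2 → MvPowerSeries (Fin 3) R) F, X 2] :
        Fin 2 → MvPowerSeries (Fin 3) R) F
    = MvPowerSeries.substSeries
      (![X 0, MvPowerSeries.substSeries (![X 1, X 2] : Fin 2 → MvPowerSeries (Fin 3) R) F] :
        Fin 2 → MvPowerSeries (Fin 3) R) F

/-- `ι` is the formal inverse of the formal group law `F`: a univariate power series with
zero constant term such that `F(x, ι(x)) = 0`. -/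
def IsFormalInverse {R : Type*} [CommRing R] (F : MvPowerSeries (Fin 2) R)
    (ι : PowerSeries R) : Prop :=
  PowerSeries.constantCoeff (R := R) ι = 0 ∧
    MvPowerSeries.substSeries (![PowerSeries.X, ι] : Fin 2 → PowerSeries R) F = 0

/-- The formal difference `x -_F y := F(x, ι(y))`. -/
def fDiff {R : Type*} [CommRing R] (F : MvPowerSeries (Fin 2) R) (ι : PowerSeries R) :
    MvPowerSeries (Fin 2) R :=
  MvPowerSeries.substSeries
    (![X 0, MvPowerSeries.substSeries (fun _ : Unit => (X 1 : MvPowerSeries (Fin 2) R)) ι] :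
      Fin 2 → MvPowerSeries (Fin 2) R) F

/-- The formal difference `y -_F x := F(y, ι(x))`. -/
def fDiffSwap {R : Type*} [CommRing R] (F : MvPowerSeries (Fin 2) R) (ι : PowerSeries R) :
    MvPowerSeries (Fin 2) R :=
  MvPowerSeries.substSeries
    (![X 1, MvPowerSeries.substSeries (fun _ : Unit => (X 0 : MvPowerSeries (Fin 2) R)) ι] :
      Fin 2 → MvPowerSeries (Fin 2) R) F

/-- The base ring `ℤ[μ₁, μ₂]` of the special elliptic formal group law. -/
abbrev Rse : Type := MvPolynomial (Fin 2) ℤ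

/-- The element `μ₁ ∈ ℤ[μ₁, μ₂]`. -/
def μ₁ : Rse := MvPolynomial.X 0

/-- The element `μ₂ ∈ ℤ[μ₁, μ₂]`. -/
def μ₂ : Rse := MvPolynomial.X 1

/-- The special elliptic formal group law
`F(x,y) = (x + y - μ₁xy)·(1 + μ₂xy)⁻¹ ∈ ℤ[μ₁,μ₂][[x,y]]`, where the inverse of the
power series `1 + μ₂xy` (whose constant coefficient is the unit `1`) is taken via
`MvPowerSeries.invOfUnit`. -/
def Fse : MvPowerSeries (Fin 2) Rse :=
  (X 0 + X 1 - C (σ := Fin 2) (R := Rse) μ₁ * (X 0 * X 1)) *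
    MvPowerSeries.invOfUnit (1 + C (σ := Fin 2) (R := Rse) μ₂ * (X 0 * X 1)) 1

/-- The formal inverse `ι(x) = -x·(1 - μ₁x)⁻¹ ∈ ℤ[μ₁,μ₂][[x]]` of the special elliptic
formal group law, where the inverse of `1 - μ₁x` is taken via `PowerSeries.invOfUnit`. -/
def ιse : PowerSeries Rse :=
  -(PowerSeries.X) * PowerSeries.invOfUnit (1 - PowerSeries.C (R := Rse) μ₁ * PowerSeries.X) 1

/-!
For arguments with zero constant term, `substSeries` agrees with Mathlib's `MvPowerSeries.subst`
and is therefore a ring homomorphism. Hence `F(u, v)` is the unique series with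
`F(u, v) · (1 + μ₂uv) = u + v - μ₁uv`, the second factor being a unit. The unit laws and
commutativity follow at once. For associativity, clearing denominators shows that both
`F(F(x, y), z)` and `F(x, F(y, z))` equal `N / D` with the symmetric series
`N = e₁ - μ₁e₂ + (μ₁² + μ₂)e₃` and `D = 1 + μ₂e₂ - μ₁μ₂e₃` in the elementary symmetric
functions `eᵢ` of `x, y, z`.
-/

namespace MvPowerSeries

variable {σ τ R : Type*} [CommRing R]

theorem coeff_prod_pow_eq_zero_of_degree_lt {a : σ → MvPowerSeries τ R}
    (ha : ∀ i, constantCoeff (a i) = 0) {d : σ →₀ ℕ} {e : τ →₀ ℕ}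
    (h : e.degree < d.degree) : coeff e (d.prod fun i n => a i ^ n) = 0 := by
  refine coeff_of_lt_order (lt_of_lt_of_le (Nat.cast_lt.mpr h) ?_)
  calc (d.degree : ℕ∞) = ∑ i ∈ d.support, (d i : ℕ∞) := by
        rw [Finsupp.degree_apply, Nat.cast_sum]
    _ ≤ ∑ i ∈ d.support, (a i ^ d i).order :=
        Finset.sum_le_sum fun i _ => le_order_pow_of_constantCoeff_eq_zero _ (ha i)
    _ ≤ _ := le_order_prod _ _

theorem substSeries_eq_subst [Fintype σ] [DecidableEq σ] {a : σ → MvPowerSeries τ R}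
    (ha : ∀ i, constantCoeff (a i) = 0) (f : MvPowerSeries σ R) : substSeries a f = subst a f := by
  ext e
  rw [coeff_subst (hasSubst_of_constantCoeff_zero ha), finsum_eq_sum_of_support_subset
    (s := Finset.Iic (Finsupp.equivFunOnFinite.symm fun _ : σ => e.degree))]
  · refine Finset.sum_congr rfl fun d _ => ?_
    rw [smul_eq_mul, Finsupp.prod_fintype _ _ fun _ => pow_zero _]
  · intro d hd
    by_contra hle
    refine hd (smul_eq_zero_of_right _ (coeff_prod_pow_eq_zero_of_degree_lt ha ?_))
    simp only [Finset.coe_Iic, Set.mem_Iic, Finsupp.le_def, not_forall, not_le] at hle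
    obtain ⟨i, hi⟩ := hle
    exact lt_of_lt_of_le hi (Finsupp.le_degree i d)

end MvPowerSeries

section SpecialElliptic

variable {R τ : Type*} [CommRing R]

def specialEllipticSeries (a b : R) : MvPowerSeries (Fin 2) R :=
  (X 0 + X 1 - C a * (X 0 * X 1)) * invOfUnit (1 + C b * (X 0 * X 1)) 1

theorem constantCoeff_specialEllipticSeries (a b : R) :
    constantCoeff (specialEllipticSeries a b) = 0 := by
  simp [specialEllipticSeries]

theorem specialEllipticSeries_mul (a b : R) :
    specialEllipticSeries a b * (1 + C b * (X 0 * X 1)) = X 0 + X 1 - C a * (X 0 * X 1) := by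
  rw [specialEllipticSeries, mul_assoc, invOfUnit_mul _ _ (by simp), mul_one]

variable {a b : R} {u v w : MvPowerSeries τ R}

theorem substSeries_specialEllipticSeries_mul (hu : constantCoeff u = 0)
    (hv : constantCoeff v = 0) :
    substSeries ![u, v] (specialEllipticSeries a b) * (1 + C b * (u * v)) =
      u + v - C a * (u * v) := by
  have huv : ∀ i, constantCoeff (![u, v] i) = 0 := Fin.forall_fin_two.mpr ⟨hu, hv⟩
  have := congrArg (substAlgHom (hasSubst_of_constantCoeff_zero huv))
    (specialEllipticSeries_mul a b)
  simp only [map_mul, map_add, map_sub, map_one, substAlgHom_X] at this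
  simpa [substSeries_eq_subst huv] using this

theorem substSeries_specialEllipticSeries_eq_of_mul (hu : constantCoeff u = 0)
    (hv : constantCoeff v = 0) {H : MvPowerSeries τ R}
    (hH : H * (1 + C b * (u * v)) = u + v - C a * (u * v)) :
    substSeries ![u, v] (specialEllipticSeries a b) = H :=
  (isUnit_iff_constantCoeff.mpr (by simp [hu])).mul_left_injective
    ((substSeries_specialEllipticSeries_mul hu hv).trans hH.symm)

theorem constantCoeff_substSeries_specialEllipticSeries (hu : constantCoeff u = 0)
    (hv : constantCoeff v = 0) :
    constantCoeff (substSeries ![u, v] (specialEllipticSeries a b)) = 0 := by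
  have huv : ∀ i, constantCoeff (![u, v] i) = 0 := Fin.forall_fin_two.mpr ⟨hu, hv⟩
  rw [substSeries_eq_subst huv]
  exact constantCoeff_subst_eq_zero (hasSubst_of_constantCoeff_zero huv) huv
    (constantCoeff_specialEllipticSeries a b)

theorem substSeries_specialEllipticSeries_assoc (hu : constantCoeff u = 0)
    (hv : constantCoeff v = 0) (hw : constantCoeff w = 0) :
    substSeries ![substSeries ![u, v] (specialEllipticSeries a b), w]
        (specialEllipticSeries a b) =
      substSeries ![u, substSeries ![v, w] (specialEllipticSeries a b)]
        (specialEllipticSeries a b) := by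
  have huv := substSeries_specialEllipticSeries_mul (a := a) (b := b) hu hv
  have hvw := substSeries_specialEllipticSeries_mul (a := a) (b := b) hv hw
  have hlhs := substSeries_specialEllipticSeries_mul (a := a) (b := b)
    (constantCoeff_substSeries_specialEllipticSeries (a := a) (b := b) hu hv) hw
  have hrhs := substSeries_specialEllipticSeries_mul (a := a) (b := b) hu
    (constantCoeff_substSeries_specialEllipticSeries (a := a) (b := b) hv hw)
  set F := specialEllipticSeries a b
  set lhs := substSeries ![substSeries ![u, v] F, w] F
  set rhs := substSeries ![u, substSeries ![v, w] F] F
  set D := 1 + C b * (u * v + v * w + w * u) - C a * C b * (u * v * w)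
  set N := u + v + w - C a * (u * v + v * w + w * u) + (C a ^ 2 + C b) * (u * v * w)
  have hD : IsUnit D := isUnit_iff_constantCoeff.mpr (by simp [D, hu, hv, hw])
  have hL : lhs * D = N := by
    linear_combination (1 + C b * (u * v)) * hlhs + (1 - C a * w - C b * w * lhs) * huv
  have hR : rhs * D = N := by
    linear_combination (1 + C b * (v * w)) * hrhs + (1 - C a * u - C b * u * rhs) * hvw
  exact hD.mul_left_injective (hL.trans hR.symm)

theorem isFormalGroupLaw_specialEllipticSeries (a b : R) :
    IsFormalGroupLaw R (specialEllipticSeries a b) where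
  subst_zero_right :=
    substSeries_specialEllipticSeries_eq_of_mul (constantCoeff_X 0) (map_zero _) (by simp)
  subst_zero_left :=
    substSeries_specialEllipticSeries_eq_of_mul (map_zero _) (constantCoeff_X 1) (by simp)
  comm := substSeries_specialEllipticSeries_eq_of_mul (constantCoeff_X 1) (constantCoeff_X 0)
    (by linear_combination specialEllipticSeries_mul a b)
  assoc := substSeries_specialEllipticSeries_assoc (constantCoeff_X 0) (constantCoeff_X 1)
    (constantCoeff_X 2)

end SpecialElliptic

/-- The special elliptic formal group law
`F(x,y) = (x + y - μ₁xy)·(1 + μ₂xy)⁻¹` over `ℤ[μ₁,μ₂]` is a one-dimensional commutative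
formal group law: `F(x,0) = x`, `F(0,y) = y`, `F(x,y) = F(y,x)` and
`F(F(x,y),z) = F(x,F(y,z))` in `ℤ[μ₁,μ₂][[x,y,z]]`. -/
theorem specialElliptic_isFormalGroupLaw : IsFormalGroupLaw Rse Fse :=
  isFormalGroupLaw_specialEllipticSeries μ₁ μ₂
end
end

section
/- Let F be a one-dimensional commutative formal group law over a commutative ring R, with a₁₁, a₁₂, a₁₃, a₂₂ the coefficients of xy, x²y, x³y, x²y² in F, let ι be the formal inverse of F, and let r ∈ R[[x,y]] be the unique series with F(x,y) = y + x·r(x,y). Then the series r(x -_F y, y) and 1 + a₁₁y + a₁₂xy + (a₂₂ - a₁₂a₁₁)(x - y)y² + a₁₃y((x - y)² + y²) have equal coefficients in all total degrees < 4. -/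
/-!
Formal group law preliminaries: substitution of (multivariate) formal power series,
the definition of a one-dimensional commutative formal group law, its formal inverse,
and the formal difference `x -_F y := F(x, ι(y))`.
-/

noncomputable section

open MvPowerSeries

/-!
The series `x -_F y` has zero constant term, so the coefficients of `r(x -_F y, y)` in total
degree `< 4` are polynomials in the coefficients of `F` in degree `≤ 4` and of `x -_F y` in
degree `≤ 3`. The axioms `F(x,0) = x` and `F(x,y) = F(y,x)` reduce the former to
`a₁₁, a₁₂, a₁₃, a₂₂`. Since `F` has no `x²` term, only the quadratic part of `x -_F y` matters,
and comparing coefficients in `F(x, ι(x)) = 0` gives `ι(x) = -x + a₁₁x² + O(x³)`, hence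
`x -_F y = x - y - a₁₁xy + a₁₁y² + O(3)`. What is left is a finite computation.
-/

open Finset

section Bidegree

-- Reducible, so that `bideg i j` and `single 0 i + single 1 j` are the same atom for `ring`.
abbrev bideg (i j : ℕ) : Fin 2 →₀ ℕ := Finsupp.single 0 i + Finsupp.single 1 j

@[simp] theorem bideg_apply_zero (i j : ℕ) : bideg i j 0 = i := by simp

@[simp] theorem bideg_apply_one (i j : ℕ) : bideg i j 1 = j := by simp

theorem bideg_apply_self (d : Fin 2 →₀ ℕ) : bideg (d 0) (d 1) = d := by
  ext a; fin_cases a <;> simp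

theorem bideg_inj {i j k l : ℕ} : bideg i j = bideg k l ↔ i = k ∧ j = l :=
  ⟨fun h => ⟨by simpa using DFunLike.congr_fun h 0, by simpa using DFunLike.congr_fun h 1⟩,
    by rintro ⟨rfl, rfl⟩; rfl⟩

theorem bideg_add (i j k l : ℕ) : bideg i j + bideg k l = bideg (i + k) (j + l) := by
  ext a; fin_cases a <;> simp

theorem bideg_tsub (i j k l : ℕ) : bideg i j - bideg k l = bideg (i - k) (j - l) := by
  ext a; fin_cases a <;> simp

theorem bideg_le_bideg {i j k l : ℕ} : bideg i j ≤ bideg k l ↔ i ≤ k ∧ j ≤ l := by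
  simp [Finsupp.le_def, Fin.forall_fin_two]

@[simp] theorem degree_bideg (i j : ℕ) : (bideg i j).degree = i + j := by
  simp

end Bidegree

section

variable {R : Type*} [CommRing R]

section Coefficients

theorem coeff_bideg_monomial (a : R) (i j p q : ℕ) :
    coeff (bideg p q) (monomial (bideg i j) a) = if p = i ∧ q = j then a else 0 := by
  simp [coeff_monomial, bideg_inj]

theorem coeff_bideg_one (p q : ℕ) :
    coeff (bideg p q) (1 : MvPowerSeries (Fin 2) R) = if p = 0 ∧ q = 0 then 1 else 0 := by
  simp [coeff_one]

theorem coeff_bideg_X_zero (p q : ℕ) :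
    coeff (bideg p q) (X 0 : MvPowerSeries (Fin 2) R) = if p = 1 ∧ q = 0 then 1 else 0 := by
  simp [coeff_X, Finsupp.ext_iff, Fin.forall_fin_two]

theorem coeff_bideg_X_one (p q : ℕ) :
    coeff (bideg p q) (X 1 : MvPowerSeries (Fin 2) R) = if p = 0 ∧ q = 1 then 1 else 0 := by
  simp [coeff_X, Finsupp.ext_iff, Fin.forall_fin_two]

theorem X_zero_pow_eq (k : ℕ) :
    (X 0 ^ k : MvPowerSeries (Fin 2) R) = monomial (bideg k 0) 1 := by
  simp [X_pow_eq, bideg]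

theorem X_one_pow_eq (k : ℕ) :
    (X 1 ^ k : MvPowerSeries (Fin 2) R) = monomial (bideg 0 k) 1 := by
  simp [X_pow_eq, bideg]

theorem coeff_bideg_X_zero_pow_mul (g : MvPowerSeries (Fin 2) R) (k p q : ℕ) :
    coeff (bideg p q) (X 0 ^ k * g) = if k ≤ p then coeff (bideg (p - k) q) g else 0 := by
  simp [X_zero_pow_eq, coeff_monomial_mul, bideg_le_bideg, bideg_tsub]

theorem coeff_bideg_mul_X_one_pow (g : MvPowerSeries (Fin 2) R) (k p q : ℕ) :
    coeff (bideg p q) (g * X 1 ^ k) = if k ≤ q then coeff (bideg p (q - k)) g else 0 := by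
  simp [X_one_pow_eq, coeff_mul_monomial, bideg_le_bideg, bideg_tsub]

theorem coeff_bideg_mul (f g : MvPowerSeries (Fin 2) R) (p q : ℕ) :
    coeff (bideg p q) (f * g) = ∑ x ∈ antidiagonal p, ∑ y ∈ antidiagonal q,
      coeff (bideg x.1 y.1) f * coeff (bideg x.2 y.2) g := by
  rw [coeff_mul, ← sum_product']
  refine sum_nbij' (fun x => ((x.1 0, x.2 0), (x.1 1, x.2 1)))
    (fun y => (bideg y.1.1 y.2.1, bideg y.1.2 y.2.2)) ?_ ?_ ?_ ?_ ?_
  · intro x hx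
    simp only [HasAntidiagonal.mem_antidiagonal, mem_product] at hx ⊢
    exact ⟨by simpa using DFunLike.congr_fun hx 0, by simpa using DFunLike.congr_fun hx 1⟩
  · intro y hy
    simp only [HasAntidiagonal.mem_antidiagonal, mem_product] at hy ⊢
    rw [bideg_add, hy.1, hy.2]
  · intro x _
    simp [bideg_apply_self]
  · intro y _
    simp
  · intro x _
    simp [bideg_apply_self]

theorem coeff_bideg_pow_of_lt {f : MvPowerSeries (Fin 2) R} (hf : constantCoeff f = 0)
    {p q k : ℕ} (h : p + q < k) : coeff (bideg p q) (f ^ k) = 0 :=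
  coeff_of_lt_order <| by
    rw [degree_bideg]
    exact (Nat.cast_lt.2 h).trans_le (le_order_pow_of_constantCoeff_eq_zero k hf)

theorem PowerSeries.coeff_pow_of_lt {φ : PowerSeries R} (hφ : constantCoeff φ = 0) {n k : ℕ}
    (h : n < k) : coeff n (φ ^ k) = 0 :=
  coeff_of_lt_order n ((Nat.cast_lt.2 h).trans_le (le_order_pow_of_constantCoeff_eq_zero k hφ))

end Coefficients

section Substitution

theorem MvPowerSeries.substSeries_eq_subst_s13 {σ τ : Type*} [Fintype σ] [DecidableEq σ]
    {a : σ → MvPowerSeries τ R} (ha : ∀ i, constantCoeff (a i) = 0) (f : MvPowerSeries σ R) :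
    substSeries a f = subst a f := by
  ext e
  rw [coeff_subst (hasSubst_of_constantCoeff_zero ha), finsum_eq_sum_of_support_subset _ ?_]
  · refine sum_congr rfl fun d _ => ?_
    rw [smul_eq_mul, Finsupp.prod_fintype _ _ fun _ => pow_zero _]
  · intro d hd
    rw [Function.mem_support] at hd
    rw [coe_Iic, Set.mem_Iic, Finsupp.le_def]
    intro i
    by_contra! h
    refine hd (smul_eq_zero_of_right _ (coeff_of_lt_order ?_))
    calc (e.degree : ℕ∞) < d i := by exact_mod_cast h
      _ ≤ ∑ j, (d j : ℕ∞) :=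
        single_le_sum (f := fun j => (d j : ℕ∞)) (fun j _ => zero_le) (mem_univ i)
      _ ≤ ∑ j, (a j ^ d j).order :=
        sum_le_sum fun j _ => le_order_pow_of_constantCoeff_eq_zero _ (ha j)
      _ ≤ (d.prod fun s n => a s ^ n).order := by
        rw [Finsupp.prod_fintype _ _ fun _ => pow_zero _]; exact le_order_prod _ _

theorem coeff_substSeries_fin_two {τ : Type*} (a b : MvPowerSeries τ R)
    (f : MvPowerSeries (Fin 2) R) (e : τ →₀ ℕ) :
    coeff e (substSeries ![a, b] f) =
      ∑ i ∈ range (e.degree + 1), ∑ j ∈ range (e.degree + 1),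
        coeff (bideg i j) f * coeff e (a ^ i * b ^ j) := by
  rw [← sum_product']
  show ∑ d ∈ Iic _, _ = _
  refine sum_nbij' (fun d => (d 0, d 1)) (fun x => bideg x.1 x.2) ?_ ?_ ?_ ?_ ?_
  · intro d hd
    simp only [mem_Iic, Finsupp.le_def, Fin.forall_fin_two,
      Finsupp.coe_equivFunOnFinite_symm] at hd
    simp only [mem_product, mem_range, Nat.lt_succ_iff]
    exact hd
  · intro x hx
    simp only [mem_product, mem_range, Nat.lt_succ_iff] at hx
    simp only [mem_Iic, Finsupp.le_def, Fin.forall_fin_two,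
      Finsupp.coe_equivFunOnFinite_symm, bideg_apply_zero, bideg_apply_one]
    exact hx
  · intro d _; exact bideg_apply_self d
  · intro x _; simp
  · intro d _; simp [bideg_apply_self]

theorem coeff_substSeries_fin_two_X_one (u r : MvPowerSeries (Fin 2) R) (p q : ℕ) :
    coeff (bideg p q) (substSeries ![u, X 1] r) =
      ∑ i ∈ range (p + q + 1), ∑ j ∈ range (p + q + 1),
        coeff (bideg i j) r * if j ≤ q then coeff (bideg p (q - j)) (u ^ i) else 0 := by
  simp only [coeff_substSeries_fin_two, degree_bideg, coeff_bideg_mul_X_one_pow]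

theorem substSeries_X_one_eq_rename (g : PowerSeries R) :
    substSeries (fun _ : Unit => (X 1 : MvPowerSeries (Fin 2) R)) g =
      rename (fun _ : Unit => (1 : Fin 2)) g := by
  rw [substSeries_eq_subst_s13 fun _ => constantCoeff_X _, rename_eq_subst]
  rfl

theorem coeff_bideg_rename_one (g : PowerSeries R) (p q : ℕ) :
    coeff (bideg p q) (rename (fun _ : Unit => (1 : Fin 2)) g) =
      if p = 0 then PowerSeries.coeff q g else 0 := by
  split_ifs with hp
  · subst hp
    have : bideg 0 q = Finsupp.embDomain (Function.Embedding.punit 1) (Finsupp.single () q) := by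
      simp [bideg, Finsupp.embDomain_single]; rfl
    rw [this]
    exact coeff_embDomain_rename _ _ _
  · refine coeff_rename_eq_zero _ _ ?_
    rintro ⟨d, hd⟩
    have := Finsupp.mapDomain_of_notMem_range (f := fun _ : Unit => (1 : Fin 2)) d 0 (by simp)
    simp_all

end Substitution

namespace IsFormalGroupLaw

variable {F : MvPowerSeries (Fin 2) R}

theorem coeff_bideg_zero (hF : IsFormalGroupLaw R F) (p : ℕ) :
    coeff (bideg p 0) F = if p = 1 then 1 else 0 := by
  have h := congr(coeff (bideg p 0) $hF.subst_zero_right)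
  rw [coeff_substSeries_fin_two, degree_bideg, sum_eq_single p] at h
  · simpa [coeff_bideg_X_zero, zero_pow_eq, X_zero_pow_eq, coeff_bideg_monomial,
      apply_ite (coeff (bideg p 0))] using h
  · intro i _ hi
    simp [zero_pow_eq, X_zero_pow_eq, coeff_bideg_monomial, apply_ite (coeff (bideg p 0)),
      Ne.symm hi]
  · simp

theorem coeff_bideg_comm (hF : IsFormalGroupLaw R F) (p q : ℕ) :
    coeff (bideg q p) F = coeff (bideg p q) F := by
  have hswap : (![X 1, X 0] : Fin 2 → MvPowerSeries (Fin 2) R) = X ∘ Equiv.swap 0 1 := by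
    ext i : 1; fin_cases i <;> rfl
  have h := hF.comm
  rw [substSeries_eq_subst_s13 (by simp [Fin.forall_fin_two]), hswap, ← rename_eq_subst] at h
  have hb : bideg q p = Finsupp.embDomain (Equiv.swap (0 : Fin 2) 1).toEmbedding (bideg p q) := by
    simp [Finsupp.embDomain_add, Finsupp.embDomain_single, add_comm]
  calc coeff (bideg q p) F
      = coeff (Finsupp.embDomain (Equiv.swap (0 : Fin 2) 1).toEmbedding (bideg p q))
          (rename (Equiv.swap (0 : Fin 2) 1) F) := by rw [hb, h]
    _ = coeff (bideg p q) F := coeff_embDomain_rename _ _ _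

theorem coeff_zero_bideg (hF : IsFormalGroupLaw R F) (q : ℕ) :
    coeff (bideg 0 q) F = if q = 1 then 1 else 0 := by
  rw [hF.coeff_bideg_comm, hF.coeff_bideg_zero]

end IsFormalGroupLaw

namespace IsFormalInverse

variable {F : MvPowerSeries (Fin 2) R} {ι : PowerSeries R}

theorem coeff_one_eq_neg_one (hF : IsFormalGroupLaw R F) (hι : IsFormalInverse F ι) :
    PowerSeries.coeff 1 ι = -1 := by
  have h := congrArg (PowerSeries.coeff 1) hι.2
  rw [PowerSeries.coeff, coeff_substSeries_fin_two] at h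
  simp [sum_range_succ, ← PowerSeries.coeff_def, PowerSeries.coeff_X_pow_mul',
    hF.coeff_bideg_zero, hF.coeff_zero_bideg, hι.1] at h
  linear_combination h

theorem coeff_two_eq (hF : IsFormalGroupLaw R F) (hι : IsFormalInverse F ι) :
    PowerSeries.coeff 2 ι = coeff (bideg 1 1) F := by
  have h := congrArg (PowerSeries.coeff 2) hι.2
  rw [PowerSeries.coeff, coeff_substSeries_fin_two] at h
  simp [sum_range_succ, ← PowerSeries.coeff_def, PowerSeries.coeff_X_pow_mul',
    hF.coeff_bideg_zero, hF.coeff_zero_bideg, hι.1, coeff_one_eq_neg_one hF hι,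
    PowerSeries.coeff_pow_of_lt hι.1] at h
  linear_combination h

end IsFormalInverse

section FormalDifference

variable {F : MvPowerSeries (Fin 2) R} {ι : PowerSeries R}

theorem coeff_fDiff (p q : ℕ) :
    coeff (bideg p q) (fDiff F ι) =
      ∑ l ∈ range (p + q + 1), coeff (bideg p l) F * PowerSeries.coeff q (ι ^ l) := by
  rw [fDiff, coeff_substSeries_fin_two, substSeries_X_one_eq_rename, degree_bideg,
    sum_eq_single p]
  · simp [← map_pow, coeff_bideg_X_zero_pow_mul, coeff_bideg_rename_one]
  · intro i _ hi
    simp [← map_pow, coeff_bideg_X_zero_pow_mul, coeff_bideg_rename_one]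
    omega
  · simp

theorem coeff_fDiff_bideg_zero (hF : IsFormalGroupLaw R F) (hι : IsFormalInverse F ι) (p : ℕ) :
    coeff (bideg p 0) (fDiff F ι) = if p = 1 then 1 else 0 := by
  rw [coeff_fDiff, sum_eq_single 0]
  · simp [hF.coeff_bideg_zero]
  · intro l _ hl
    rw [PowerSeries.coeff_pow_of_lt hι.1 (Nat.pos_of_ne_zero hl), mul_zero]
  · simp

theorem constantCoeff_fDiff (hF : IsFormalGroupLaw R F) (hι : IsFormalInverse F ι) :
    constantCoeff (fDiff F ι) = 0 := by
  simpa [bideg] using coeff_fDiff_bideg_zero hF hι 0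

theorem coeff_fDiff_zero_bideg (hF : IsFormalGroupLaw R F) (hι : IsFormalInverse F ι) (q : ℕ) :
    coeff (bideg 0 q) (fDiff F ι) = PowerSeries.coeff q ι := by
  rcases q.eq_zero_or_pos with rfl | hq
  · simp [coeff_fDiff, hF.coeff_zero_bideg, hι.1]
  · simp [coeff_fDiff, hF.coeff_zero_bideg, hq]

theorem coeff_fDiff_one_one (hF : IsFormalGroupLaw R F) (hι : IsFormalInverse F ι) :
    coeff (bideg 1 1) (fDiff F ι) = -coeff (bideg 1 1) F := by
  simp [coeff_fDiff, sum_range_succ, hF.coeff_bideg_zero, hι.coeff_one_eq_neg_one hF,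
    PowerSeries.coeff_pow_of_lt hι.1]

end FormalDifference

theorem coeff_bideg_of_eq_X_one_add_X_zero_mul {F r : MvPowerSeries (Fin 2) R}
    (hr : F = X 1 + X 0 * r) (i j : ℕ) : coeff (bideg i j) r = coeff (bideg (i + 1) j) F := by
  rw [hr, map_add, ← pow_one (X 0), coeff_bideg_X_zero_pow_mul]
  simp [coeff_bideg_X_one]

end

/-- Let `F` be a one-dimensional commutative formal group law over `R`,
with `a₁₁, a₁₂, a₁₃, a₂₂` the coefficients of `xy, x²y, x³y, x²y²` in `F`, `ι` its formal
inverse, and `r` the unique series with `F(x,y) = y + x·r(x,y)`. Then `r(x -_F y, y)` and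
`1 + a₁₁y + a₁₂xy + (a₂₂ - a₁₂a₁₁)(x-y)y² + a₁₃y((x-y)² + y²)` have equal coefficients
in all total degrees `< 4`. -/
theorem fgl_r_of_fDiff_mod_deg4 {R : Type*} [CommRing R]
    (F : MvPowerSeries (Fin 2) R) (hF : IsFormalGroupLaw R F)
    (ι : PowerSeries R) (hι : IsFormalInverse F ι)
    (a₁₁ a₁₂ a₁₃ a₂₂ : R)
    (ha₁₁ : a₁₁ = MvPowerSeries.coeff (R := R) (Finsupp.single 0 1 + Finsupp.single 1 1) F)
    (ha₁₂ : a₁₂ = MvPowerSeries.coeff (R := R) (Finsupp.single 0 2 + Finsupp.single 1 1) F)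
    (ha₁₃ : a₁₃ = MvPowerSeries.coeff (R := R) (Finsupp.single 0 3 + Finsupp.single 1 1) F)
    (ha₂₂ : a₂₂ = MvPowerSeries.coeff (R := R) (Finsupp.single 0 2 + Finsupp.single 1 2) F)
    (r : MvPowerSeries (Fin 2) R) (hr : F = X 1 + X 0 * r) :
    ∀ d : Fin 2 →₀ ℕ, d 0 + d 1 < 4 →
      MvPowerSeries.coeff (R := R) d
        (MvPowerSeries.substSeries
          (![fDiff F ι, X 1] : Fin 2 → MvPowerSeries (Fin 2) R) r) =
      MvPowerSeries.coeff (R := R) d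
        (1 + C (σ := Fin 2) (R := R) a₁₁ * X 1 + C (σ := Fin 2) (R := R) a₁₂ * (X 0 * X 1)
          + C (σ := Fin 2) (R := R) (a₂₂ - a₁₂ * a₁₁) * ((X 0 - X 1) * X 1 ^ 2)
          + C (σ := Fin 2) (R := R) a₁₃ * (X 1 * ((X 0 - X 1) ^ 2 + X 1 ^ 2))) := by
  intro d hd
  obtain ⟨p, q, rfl⟩ : ∃ p q, d = bideg p q := ⟨d 0, d 1, (bideg_apply_self d).symm⟩
  simp only [bideg_apply_zero, bideg_apply_one] at hd
  subst ha₁₁ ha₁₂ ha₁₃ ha₂₂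
  rw [coeff_substSeries_fin_two_X_one]
  simp only [coeff_bideg_of_eq_X_one_add_X_zero_mul hr]
  have hp : p ≤ 3 := by omega
  have hq : q ≤ 3 := by omega
  interval_cases p <;> interval_cases q <;> (try omega) <;>
    simp [sum_range_succ, Finset.Nat.sum_antidiagonal_succ, sq, coeff_bideg_mul, coeff_C,
      coeff_bideg_one, coeff_bideg_X_zero, coeff_bideg_X_one,
      coeff_bideg_pow_of_lt (constantCoeff_fDiff hF hι), hF.coeff_bideg_zero,
      hF.coeff_bideg_comm 2 1, hF.coeff_bideg_comm 3 1, hι.coeff_one_eq_neg_one hF,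
      hι.coeff_two_eq hF, coeff_fDiff_bideg_zero hF hι, coeff_fDiff_zero_bideg hF hι,
      coeff_fDiff_one_one hF hι] <;>
    ring
end
end

section
/- Let R be a commutative ring containing an invertible element t such that s := t + t⁻¹ is also invertible, and let A be an associative unital R-algebra. Suppose T₁, T₂ ∈ A satisfy the Iwahori–Hecke relations Tᵢ² = (t⁻¹ - t)Tᵢ + 1 (i = 1,2) and T₁T₂T₁ = T₂T₁T₂. Define Cᵢ := s⁻¹(Tᵢ + t). Then: (a) Cᵢ² = Cᵢ for i = 1,2, and (c) C₁C₂C₁ - C₂C₁C₂ = μ₂(C₂ - C₁) where μ₂ = -s⁻². Moreover, if T₁T₂ = T₂T₁ then C₁C₂ = C₂C₁. -/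
/-- Let `R` be a commutative ring with an invertible element `t` such
that `s := t + t⁻¹` is also invertible, and let `A` be an associative unital `R`-algebra.
If `T₁, T₂ ∈ A` satisfy the Iwahori–Hecke relations `Tᵢ² = (t⁻¹ - t)Tᵢ + 1` and
`T₁T₂T₁ = T₂T₁T₂`, and `Cᵢ := s⁻¹·(Tᵢ + t)`, then `Cᵢ² = Cᵢ`,
`C₁C₂C₁ - C₂C₁C₂ = μ₂(C₂ - C₁)` with `μ₂ = -s⁻²`, and if `T₁T₂ = T₂T₁` then
`C₁C₂ = C₂C₁`. -/
theorem hecke_pushpull_relations {R : Type*} [CommRing R] {A : Type*} [Ring A] [Algebra R A]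
    (t s : Rˣ) (hs : (s : R) = (t : R) + ((t⁻¹ : Rˣ) : R))
    (T₁ T₂ : A)
    (h₁ : T₁ ^ 2 = (((t⁻¹ : Rˣ) : R) - (t : R)) • T₁ + 1)
    (h₂ : T₂ ^ 2 = (((t⁻¹ : Rˣ) : R) - (t : R)) • T₂ + 1)
    (hbraid : T₁ * T₂ * T₁ = T₂ * T₁ * T₂)
    (C₁ C₂ : A)
    (hC₁ : C₁ = ((s⁻¹ : Rˣ) : R) • (T₁ + (t : R) • (1 : A)))
    (hC₂ : C₂ = ((s⁻¹ : Rˣ) : R) • (T₂ + (t : R) • (1 : A))) :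
    C₁ ^ 2 = C₁ ∧ C₂ ^ 2 = C₂ ∧
    C₁ * C₂ * C₁ - C₂ * C₁ * C₂ = (-(((s⁻¹ : Rˣ) : R) ^ 2)) • (C₂ - C₁) ∧
    (T₁ * T₂ = T₂ * T₁ → C₁ * C₂ = C₂ * C₁) := by
  have hti : (t : R) * ((t⁻¹ : Rˣ) : R) = 1 := t.mul_inv
  have ha : ((s⁻¹ : Rˣ) : R) * ((t : R) + ((t⁻¹ : Rˣ) : R)) = 1 := by
    rw [← hs]; exact s.inv_mul
  have h₁' : T₁ * T₁ = (((t⁻¹ : Rˣ) : R) - (t : R)) • T₁ + 1 := by rw [← sq]; exact h₁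
  have h₂' : T₂ * T₂ = (((t⁻¹ : Rˣ) : R) - (t : R)) • T₂ + 1 := by rw [← sq]; exact h₂
  subst hC₁ hC₂
  refine ⟨?_, ?_, ?_, fun hc => ?_⟩
  · rw [sq]
    simp only [smul_mul_smul_comm, mul_add, add_mul, smul_mul_assoc, mul_smul_comm,
      smul_add, smul_smul, mul_one, one_mul, h₁']
    match_scalars
    · linear_combination ((s⁻¹:Rˣ):R) * ha
    · linear_combination (((s⁻¹:Rˣ):R)*(t:R))*ha - (((s⁻¹:Rˣ):R)*((s⁻¹:Rˣ):R))*hti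
  · rw [sq]
    simp only [smul_mul_smul_comm, mul_add, add_mul, smul_mul_assoc, mul_smul_comm,
      smul_add, smul_smul, mul_one, one_mul, h₂']
    match_scalars
    · linear_combination ((s⁻¹:Rˣ):R) * ha
    · linear_combination (((s⁻¹:Rˣ):R)*(t:R))*ha - (((s⁻¹:Rˣ):R)*((s⁻¹:Rˣ):R))*hti
  · simp only [smul_mul_smul_comm, mul_add, add_mul, smul_mul_assoc, mul_smul_comm,
      smul_add, smul_sub, sub_smul, smul_smul, mul_one, one_mul, mul_assoc, h₁', h₂']
    rw [show T₁ * (T₂ * T₁) = T₂ * T₁ * T₂ by rw [← mul_assoc]; exact hbraid]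
    simp only [mul_add, add_mul, smul_mul_assoc, mul_smul_comm, smul_add, smul_smul,
      mul_one, one_mul, mul_assoc]
    match_scalars <;>
      first
        | linear_combination (((s⁻¹:Rˣ):R)^3)*hti
        | linear_combination (-(((s⁻¹:Rˣ):R)^3))*hti
        | ring
  · simp only [smul_mul_smul_comm, mul_add, add_mul, smul_mul_assoc, mul_smul_comm,
      smul_add, smul_smul, mul_one, one_mul, hc]
    match_scalars <;> ring
end
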